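/- arXiv:1812.06277 — 9 statements merged into one kernel-verified Lean document; each statement's English description precedes it below -/
import Mathlib

section
/- Let T be a distributive lattice and S a generating subset of T. A prime ideal p of T is completely determined by its trace p ∩ S; that is, if p and q are prime ideals with p ∩ S = q ∩ S, then p = q. -/
/-- Closure of a subset of a bounded lattice under finite meets and joins
(including the empty meet `⊤` and the empty join `⊥`). -/
inductive LatticeGen {T : Type*} [Lattice T] [BoundedOrder T] (S : Set T) : T → Prop
  | base : ∀ x ∈ S, LatticeGen S x
  | top : LatticeGen S ⊤
  | bot : LatticeGen S ⊥
  | sup : ∀ {x y}, LatticeGen S x → LatticeGen S y → LatticeGen S (x ⊔ y)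
  | inf : ∀ {x y}, LatticeGen S x → LatticeGen S y → LatticeGen S (x ⊓ y)

/-!
A prime ideal `p` is the kernel of the bounded lattice morphism `x ↦ x ∉ p` into `Prop`, and two
bounded lattice morphisms that agree on a generating set agree everywhere.
-/

theorem LatticeGen.apply_eq_of_eqOn {T β : Type*} [Lattice T] [BoundedOrder T] [Lattice β]
    [BoundedOrder β] {S : Set T} {f g : BoundedLatticeHom T β} (hfg : Set.EqOn f g S) {x : T}
    (hx : LatticeGen S x) : f x = g x := by
  induction hx with
  | base x hxS => exact hfg hxS
  | top => rw [map_top, map_top]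
  | bot => rw [map_bot, map_bot]
  | sup _ _ ihx ihy => rw [map_sup, map_sup, ihx, ihy]
  | inf _ _ ihx ihy => rw [map_inf, map_inf, ihx, ihy]

namespace Order.Ideal

variable {T : Type*} [Lattice T] {I : Ideal T}

theorem IsPrime.inf_mem_iff (hI : I.IsPrime) {x y : T} : x ⊓ y ∈ I ↔ x ∈ I ∨ y ∈ I :=
  ⟨hI.mem_or_mem, fun h => h.elim (I.lower inf_le_left) (I.lower inf_le_right)⟩

def IsPrime.notMemHom [BoundedOrder T] (hI : I.IsPrime) : BoundedLatticeHom T Prop where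
  toFun x := x ∉ I
  map_sup' x y := by rw [sup_mem_iff, not_and_or]; rfl
  map_inf' x y := by rw [hI.inf_mem_iff, not_or]; rfl
  map_top' := eq_true hI.top_notMem
  map_bot' := eq_false (not_not_intro I.bot_mem)

@[simp]
theorem IsPrime.notMemHom_apply [BoundedOrder T] (hI : I.IsPrime) (x : T) :
    hI.notMemHom x = (x ∉ I) :=
  rfl

end Order.Ideal

/-- A prime ideal of a distributive lattice is determined by its trace on a
generating subset. -/
theorem primeIdeal_eq_of_trace_eq {T : Type*} [DistribLattice T] [BoundedOrder T]
    (S : Set T) (hS : ∀ t : T, LatticeGen S t)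
    (p q : Order.Ideal T) (hp : p.IsPrime) (hq : q.IsPrime)
    (h : (p : Set T) ∩ S = (q : Set T) ∩ S) : p = q := by
  have hpq : Set.EqOn hp.notMemHom hq.notMemHom S := fun x hx => by
    simpa [hx] using (Set.ext_iff.mp h x).not
  ext x
  simpa using congrArg Not (LatticeGen.apply_eq_of_eqOn hpq (hS x))
end

section
/- For an ideal J of a distributive lattice T, the set J_T(J) = {a ∈ T | ∀ x ∈ T, a ∨ x = 1 → ∃ z ∈ J, z ∨ x = 1} is an ideal of T containing J. -/
namespace Order.Ideal

variable {T : Type*} [SemilatticeSup T] [OrderTop T]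

def jacobsonCarrier (J : Ideal T) : Set T :=
  {a | ∀ x, a ⊔ x = ⊤ → ∃ z ∈ J, z ⊔ x = ⊤}

variable (J : Ideal T)

theorem subset_jacobsonCarrier : (J : Set T) ⊆ jacobsonCarrier J :=
  fun a ha _ hx ↦ ⟨a, ha, hx⟩

theorem isLowerSet_jacobsonCarrier : IsLowerSet (jacobsonCarrier J) :=
  fun _ _ hba ha x hbx ↦ ha x (top_le_iff.mp (hbx ▸ sup_le_sup_right hba x))

theorem supClosed_jacobsonCarrier : SupClosed (jacobsonCarrier J) := by
  intro a ha b hb x hx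
  -- Feed `b ⊔ x` to `a`, then `x ⊔ z` to `b`; the two witnesses from `J` combine.
  obtain ⟨z, hzJ, hz⟩ := ha (b ⊔ x) (by rw [← sup_assoc, hx])
  obtain ⟨w, hwJ, hw⟩ := hb (x ⊔ z) (by rw [← hz]; ac_rfl)
  exact ⟨w ⊔ z, J.sup_mem hwJ hzJ, by rw [← hw]; ac_rfl⟩

theorem isIdeal_jacobsonCarrier : IsIdeal (jacobsonCarrier J) where
  IsLowerSet := isLowerSet_jacobsonCarrier J
  Nonempty := J.nonempty.mono (subset_jacobsonCarrier J)
  Directed := (supClosed_jacobsonCarrier J).directedOn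

def jacobsonRadical : Ideal T :=
  (isIdeal_jacobsonCarrier J).toIdeal

@[simp]
theorem coe_jacobsonRadical : (jacobsonRadical J : Set T) = jacobsonCarrier J :=
  rfl

theorem le_jacobsonRadical : J ≤ jacobsonRadical J :=
  subset_jacobsonCarrier J

end Order.Ideal

/-- The Jacobson radical of an ideal of a distributive lattice is an ideal
containing it. -/
theorem jacobson_radical_isIdeal {T : Type*} [DistribLattice T] [BoundedOrder T]
    (J : Order.Ideal T) :
    ∃ K : Order.Ideal T,
      (K : Set T) = {a : T | ∀ x : T, a ⊔ x = ⊤ → ∃ z ∈ J, z ⊔ x = ⊤} ∧ J ≤ K :=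
  ⟨J.jacobsonRadical, J.coe_jacobsonRadical, J.le_jacobsonRadical⟩
end

section
/- Let T be a distributive lattice, s₁, …, sₙ ∈ T, aᵢ = ↓sᵢ the corresponding principal ideals, and a = ⋂ᵢ aᵢ. If (x₁, …, xₙ) is a family in T such that for all i, j one has xᵢ ≡ xⱼ modulo the ideal aᵢ ∨ aⱼ, then there exists x ∈ T, unique modulo a, such that x ≡ xᵢ modulo aᵢ for each i. -/
/-! Take `y := ⨅ᵢ (xᵢ ⊔ sᵢ)`. By distributivity `y ⊔ sⱼ = ⨅ᵢ (xᵢ ⊔ sᵢ ⊔ sⱼ)`, and compatibility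
rewrites each term as `(xⱼ ⊔ sⱼ) ⊔ sᵢ`, so `y ⊔ sⱼ = (xⱼ ⊔ sⱼ) ⊔ ⨅ᵢ sᵢ = xⱼ ⊔ sⱼ`. Uniqueness is
distributivity again: `y ⊔ ⨅ᵢ sᵢ = ⨅ᵢ (y ⊔ sᵢ)` depends only on the classes of `y` modulo the `sᵢ`. -/

namespace Finset

variable {ι T : Type*} [DistribLattice T] [OrderTop T] {t : Finset ι} {s : ι → T}

theorem sup_inf_eq_of_forall_sup_eq {y y' : T} (h : ∀ i ∈ t, y ⊔ s i = y' ⊔ s i) :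
    y ⊔ t.inf s = y' ⊔ t.inf s := by
  rw [inf_sup_distrib_left, inf_sup_distrib_left]
  exact inf_congr rfl h

theorem inf_sup_sup_eq_of_compatible {x : ι → T}
    (hcomp : ∀ i ∈ t, ∀ j ∈ t, x i ⊔ (s i ⊔ s j) = x j ⊔ (s i ⊔ s j)) {j : ι} (hj : j ∈ t) :
    t.inf (fun i => x i ⊔ s i) ⊔ s j = x j ⊔ s j := by
  have hswap : ∀ i ∈ t, x i ⊔ s i ⊔ s j = x j ⊔ s j ⊔ s i := fun i hi => by
    rw [sup_assoc, hcomp i hi j hj, sup_comm (s i), sup_assoc]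
  calc t.inf (fun i => x i ⊔ s i) ⊔ s j
      = t.inf (fun i => x j ⊔ s j ⊔ s i) := by
        rw [inf_sup_distrib_right]; exact inf_congr rfl hswap
    _ = x j ⊔ s j ⊔ t.inf s := (inf_sup_distrib_left ..).symm
    _ = x j ⊔ s j := sup_eq_left.mpr ((inf_le hj).trans le_sup_right)

end Finset

/-- Chinese remainder theorem for a distributive lattice and a finite family of
principal ideals `↓sᵢ` (Fact 1 / 1.5, item 1): a family compatible modulo the
ideals `↓(sᵢ ⊔ sⱼ)` glues to an element, unique modulo `⋂ᵢ ↓sᵢ = ↓(⨅ᵢ sᵢ)`. -/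
theorem lattice_crt {T : Type*} [DistribLattice T] [BoundedOrder T] (n : ℕ)
    (s : Fin n → T) (x : Fin n → T)
    (hcomp : ∀ i j : Fin n, x i ⊔ (s i ⊔ s j) = x j ⊔ (s i ⊔ s j)) :
    ∃ y : T, (∀ i : Fin n, y ⊔ s i = x i ⊔ s i) ∧
      ∀ y' : T, (∀ i : Fin n, y' ⊔ s i = x i ⊔ s i) →
        y' ⊔ Finset.univ.inf s = y ⊔ Finset.univ.inf s := by
  have hy : ∀ i, Finset.univ.inf (fun i => x i ⊔ s i) ⊔ s i = x i ⊔ s i := fun i =>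
    Finset.inf_sup_sup_eq_of_compatible (fun i _ j _ => hcomp i j) (Finset.mem_univ i)
  exact ⟨_, hy, fun y' hy' =>
    Finset.sup_inf_eq_of_forall_sup_eq fun i _ => (hy' i).trans (hy i).symm⟩
end

section
/- Let T be a distributive lattice and s₁, …, sₙ ∈ T with s₁ ∧ ⋯ ∧ sₙ = 0. Write Tᵢ = T/(sᵢ = 0) ≅ ↑sᵢ and Tᵢⱼ = T/(sᵢ ∨ sⱼ = 0), with canonical projections πᵢ : T → Tᵢ and πᵢⱼ : Tᵢ → Tᵢⱼ. Then (T, (πᵢ)) is the inverse limit of the diagram formed by the Tᵢ and Tᵢⱼ: the natural map from T to the subset of ∏ᵢ Tᵢ of compatible families is an isomorphism of lattices. -/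
/-!
Joining with `sᵢ` is the projection `πᵢ : T → ↑sᵢ`. Distributivity and `⨅ᵢ sᵢ = ⊥` give
`⨅ᵢ (x ⊔ sᵢ) = x ⊔ ⨅ᵢ sᵢ = x`, so `x` is recovered from its projections by taking their meet.
Conversely, for a compatible family `f` the meet `y = ⨅ⱼ fⱼ` satisfies
`y ⊔ sᵢ = ⨅ⱼ (fⱼ ⊔ sᵢ) = ⨅ⱼ (fᵢ ⊔ sⱼ) = fᵢ ⊔ ⨅ⱼ sⱼ = fᵢ`, so every compatible family is the
family of projections of its meet. Both maps are monotone, hence an order isomorphism.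
-/

namespace Finset

variable {ι T : Type*} [DistribLattice T] [BoundedOrder T] {t : Finset ι} {s : ι → T}

theorem inf_sup_eq_self_of_inf_eq_bot (hs : t.inf s = ⊥) (x : T) :
    t.inf (fun i => x ⊔ s i) = x := by
  rw [← inf_sup_distrib_left, hs, sup_bot_eq]

theorem inf_sup_eq_of_sup_comm_of_inf_eq_bot (hs : t.inf s = ⊥) {f : ι → T} {i : ι}
    (hf : ∀ j ∈ t, f j ⊔ s i = f i ⊔ s j) : t.inf f ⊔ s i = f i := by
  rw [inf_sup_distrib_right, inf_congr rfl hf, ← inf_sup_distrib_left, hs, sup_bot_eq]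

end Finset

section CompatibleFamilies

variable {ι T : Type*} [Fintype ι] [DistribLattice T] [BoundedOrder T]

def orderIsoCompatibleFamilies (s : ι → T) (hs : Finset.univ.inf s = ⊥) :
    T ≃o {f : ι → T // (∀ i, s i ≤ f i) ∧ ∀ i j, f i ⊔ s j = f j ⊔ s i} :=
  Equiv.toOrderIso
    { toFun x := ⟨fun i => x ⊔ s i, fun _ => le_sup_right,
        fun i j => by rw [sup_assoc, sup_assoc, sup_comm (s i)]⟩
      invFun f := Finset.univ.inf f.1
      left_inv := Finset.inf_sup_eq_self_of_inf_eq_bot hs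
      right_inv f := Subtype.ext <| funext fun _ =>
        Finset.inf_sup_eq_of_sup_comm_of_inf_eq_bot hs fun j _ => f.2.2 j _ }
    (fun _ _ hxy _ => sup_le_sup_right hxy _)
    (fun _ _ hfg => Finset.inf_mono_fun fun i _ => hfg i)

@[simp]
theorem orderIsoCompatibleFamilies_apply_coe (s : ι → T) (hs : Finset.univ.inf s = ⊥)
    (x : T) (i : ι) : (orderIsoCompatibleFamilies s hs x : ι → T) i = x ⊔ s i :=
  rfl

end CompatibleFamilies

/-- Fact 1 / 1.5, item 2: if the principal ideals `↓sᵢ` cover `T`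
(i.e. `⨅ᵢ sᵢ = ⊥`), then `T`, with the quotient maps `πᵢ : x ↦ x ⊔ sᵢ`
onto `Tᵢ = ↑sᵢ ≅ T/(sᵢ = 0)`, is the inverse limit of the diagram of the `Tᵢ`
and `Tᵢⱼ`: it is order-isomorphic (hence lattice-isomorphic) to the set of
compatible families. -/
theorem lattice_inverse_limit {T : Type*} [DistribLattice T] [BoundedOrder T]
    (n : ℕ) (s : Fin n → T) (hcov : Finset.univ.inf s = ⊥) :
    ∃ e : T ≃o {f : Fin n → T // (∀ i, s i ≤ f i) ∧
        ∀ i j : Fin n, f i ⊔ s j = f j ⊔ s i},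
      ∀ (x : T) (i : Fin n), (e x : Fin n → T) i = x ⊔ s i :=
  ⟨orderIsoCompatibleFamilies s hcov, orderIsoCompatibleFamilies_apply_coe s hcov⟩
end

section
/- Let Γ be an abelian lattice-ordered group and a₁, …, aₙ, b₁, …, bₘ ∈ Γ with n, m ≥ 1. The entailment a₁, …, aₙ ⊢ b₁, …, bₘ holds in the linear lattice Liog(Γ) if and only if there exists k > 0 such that b₁⁻ ∧ ⋯ ∧ bₘ⁻ ≤ k·(a₁⁻ ∨ ⋯ ∨ aₙ⁻). -/
/-!
If `b₁⁻ ∧ ⋯ ∧ bₘ⁻ ≤ k • (a₁⁻ ∨ ⋯ ∨ aₙ⁻)`, a sup-preserving map `φ` to a totally ordered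
group kills the right-hand side as soon as every `aᵢ` becomes nonnegative, so the infimum of
the `φ(bⱼ)⁻` is `0` and, by totality, one `φ(bⱼ)` is nonnegative.

Conversely, put `A = ⋁ aᵢ⁻` and `B = ⋀ bⱼ⁻`, and suppose `B` lies below no `k • A`. Then `B`
avoids the solid subgroup generated by `A`, and Zorn gives a solid subgroup `M ∋ A` maximal
for avoiding `B`. It is prime: if `z⁺, z⁻ ∉ M`, maximality bounds `|B|` by both `h + k • z⁺`
and `h + k • z⁻` with `h ∈ M`, and disjointness of `z⁺` and `z⁻` gives `|B| ≤ h`. The image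
of the positive cone in `Γ ⧸ M` is then a total cone, so `Γ ⧸ M` is a totally ordered group
in which every `aᵢ` is nonnegative but no `bⱼ` is.
-/

open LatticeOrderedAddCommGroup

section

variable {Γ : Type*} [Lattice Γ] [AddCommGroup Γ]

lemma AddSubgroup.exists_le_maximal_isSolid_notMem {B : Γ} {H : AddSubgroup Γ}
    (hH : IsSolid (H : Set Γ)) (hB : B ∉ H) :
    ∃ M, H ≤ M ∧ Maximal (fun M : AddSubgroup Γ => IsSolid (M : Set Γ) ∧ B ∉ M) M := by
  refine zorn_le_nonempty₀ _ (fun c hc hchain K hK => ?_) H ⟨hH, hB⟩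
  have mem_sSup {y : Γ} : y ∈ sSup c ↔ ∃ s ∈ c, y ∈ s :=
    mem_sSup_of_directedOn ⟨K, hK⟩ hchain.directedOn
  refine ⟨sSup c, ⟨fun y hy w hwy => ?_, fun hBc => ?_⟩, fun s hs => le_sSup hs⟩
  · obtain ⟨s, hs, hys⟩ := mem_sSup.1 hy
    exact mem_sSup.2 ⟨s, hs, (hc hs).1 hys hwy⟩
  · obtain ⟨s, hs, hBs⟩ := mem_sSup.1 hBc
    exact (hc hs).2 hBs

variable [AddLeftMono Γ]

lemma LatticeOrderedAddCommGroup.IsSolid.mem_of_nonneg_of_le {s : Set Γ} (hs : IsSolid s)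
    {x y : Γ} (hx : x ∈ s) (hy : 0 ≤ y) (hyx : y ≤ x) : y ∈ s :=
  hs hx (by rwa [abs_of_nonneg hy, abs_of_nonneg (hy.trans hyx)])

lemma nsmul_inf_eq_zero {x y : Γ} (hx : 0 ≤ x) (hy : 0 ≤ y) (h : x ⊓ y = 0) (k : ℕ) :
    k • x ⊓ y = 0 := by
  induction k with
  | zero => rwa [zero_smul, inf_eq_left]
  | succ k ih =>
    refine le_antisymm ?_ (le_inf (nsmul_nonneg hx _) hy)
    have hle : (k + 1) • x ⊓ y ≤ k • x :=
      calc (k + 1) • x ⊓ y ≤ (k • x + x) ⊓ (k • x + y) :=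
            inf_le_inf (succ_nsmul x k).le (le_add_of_nonneg_left (nsmul_nonneg hx k))
        _ = k • x := by rw [← add_inf, h, add_zero]
    exact ih ▸ le_inf hle inf_le_right

lemma nsmul_posPart_inf_nsmul_negPart_eq_zero (z : Γ) (k : ℕ) : k • z⁺ ⊓ k • z⁻ = 0 := by
  have h := nsmul_inf_eq_zero (posPart_nonneg z) (negPart_nonneg z)
    (posPart_inf_negPart_eq_zero z) k
  rw [inf_comm] at h ⊢
  exact nsmul_inf_eq_zero (negPart_nonneg z) (nsmul_nonneg (posPart_nonneg z) k) h k

namespace AddSubgroup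

/-- For solid `M`, the solid subgroup generated by `M` and `x`. -/
def solidAdjoin (M : AddSubgroup Γ) (x : Γ) : AddSubgroup Γ where
  carrier := {w | ∃ h ∈ M, ∃ k : ℕ, |w| ≤ h + k • |x|}
  zero_mem' := ⟨0, M.zero_mem, 0, by simp⟩
  add_mem' := by
    rintro w₁ w₂ ⟨h₁, hh₁, k₁, hw₁⟩ ⟨h₂, hh₂, k₂, hw₂⟩
    refine ⟨h₁ + h₂, M.add_mem hh₁ hh₂, k₁ + k₂, ?_⟩
    calc |w₁ + w₂| ≤ |w₁| + |w₂| := abs_add_le w₁ w₂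
      _ ≤ (h₁ + k₁ • |x|) + (h₂ + k₂ • |x|) := add_le_add hw₁ hw₂
      _ = h₁ + h₂ + (k₁ + k₂) • |x| := by rw [add_nsmul]; abel
  neg_mem' := by
    rintro w ⟨h, hh, k, hw⟩
    exact ⟨h, hh, k, (abs_neg w).trans_le hw⟩

variable {M : AddSubgroup Γ} {x B : Γ}

lemma isSolid_solidAdjoin : IsSolid (M.solidAdjoin x : Set Γ) :=
  fun _ ⟨h, hh, k, hw⟩ _ hvw => ⟨h, hh, k, hvw.trans hw⟩

lemma mem_solidAdjoin_self : x ∈ M.solidAdjoin x := ⟨0, M.zero_mem, 1, by simp⟩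

lemma le_solidAdjoin (hM : IsSolid (M : Set Γ)) : M ≤ M.solidAdjoin x :=
  fun w hw => ⟨|w|, hM hw (abs_abs w).le, 0, by simp⟩

lemma mem_solidAdjoin_of_maximal
    (hM : Maximal (fun M : AddSubgroup Γ => IsSolid (M : Set Γ) ∧ B ∉ M) M) (hx : x ∉ M) :
    B ∈ M.solidAdjoin x := by
  by_contra hB
  exact hx (hM.2 ⟨isSolid_solidAdjoin, hB⟩ (le_solidAdjoin hM.1.1) mem_solidAdjoin_self)

theorem posPart_mem_or_negPart_mem_of_maximal
    (hM : Maximal (fun M : AddSubgroup Γ => IsSolid (M : Set Γ) ∧ B ∉ M) M) (z : Γ) :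
    z⁺ ∈ M ∨ z⁻ ∈ M := by
  by_contra! hz
  obtain ⟨h₁, hh₁, k₁, hB₁⟩ := mem_solidAdjoin_of_maximal hM hz.1
  obtain ⟨h₂, hh₂, k₂, hB₂⟩ := mem_solidAdjoin_of_maximal hM hz.2
  set h := |h₁| + |h₂|
  set k := k₁ + k₂
  have hhM : h ∈ M := M.add_mem (hM.1.1 hh₁ (abs_abs h₁).le) (hM.1.1 hh₂ (abs_abs h₂).le)
  have hB : |B| ≤ h :=
    calc |B| ≤ (h + k • z⁺) ⊓ (h + k • z⁻) := by
          refine le_inf (hB₁.trans (add_le_add ?_ ?_)) (hB₂.trans (add_le_add ?_ ?_))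
          · exact (le_abs_self h₁).trans (le_add_of_nonneg_right (abs_nonneg h₂))
          · rw [abs_of_nonneg (posPart_nonneg z)]
            exact nsmul_le_nsmul_left (posPart_nonneg z) (Nat.le_add_right k₁ k₂)
          · exact (le_abs_self h₂).trans (le_add_of_nonneg_left (abs_nonneg h₁))
          · rw [abs_of_nonneg (negPart_nonneg z)]
            exact nsmul_le_nsmul_left (negPart_nonneg z) (Nat.le_add_left k₂ k₁)
      _ = h := by rw [← add_inf, nsmul_posPart_inf_nsmul_negPart_eq_zero, add_zero]
  exact hM.1.2 (hM.1.1 hhM (hB.trans (le_abs_self h)))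

theorem exists_isSolid_prime_of_forall_not_abs_le_nsmul {A : Γ}
    (hAB : ∀ k : ℕ, ¬ |B| ≤ k • |A|) :
    ∃ M : AddSubgroup Γ,
      IsSolid (M : Set Γ) ∧ (∀ z : Γ, z⁺ ∈ M ∨ z⁻ ∈ M) ∧ A ∈ M ∧ B ∉ M := by
  have hB : B ∉ (⊥ : AddSubgroup Γ).solidAdjoin A := by
    rintro ⟨h, hh, k, hk⟩
    rw [mem_bot.1 hh, zero_add] at hk
    exact hAB k hk
  obtain ⟨M, hAM, hM⟩ := exists_le_maximal_isSolid_notMem isSolid_solidAdjoin hB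
  exact ⟨M, hM.1.1, posPart_mem_or_negPart_mem_of_maximal hM, hAM mem_solidAdjoin_self, hM.1.2⟩

end AddSubgroup

namespace LatticeOrderedAddCommGroup.IsSolid

variable {M : AddSubgroup Γ} (hM : IsSolid (M : Set Γ))

def quotientNonnegCone : AddGroupCone (Γ ⧸ M) where
  carrier := {q | ∃ c : Γ, 0 ≤ c ∧ (c : Γ ⧸ M) = q}
  zero_mem' := ⟨0, le_rfl, rfl⟩
  add_mem' := by
    rintro _ _ ⟨c, hc, rfl⟩ ⟨d, hd, rfl⟩
    exact ⟨c + d, add_nonneg hc hd, rfl⟩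
  eq_zero_of_mem_of_neg_mem' := by
    rintro _ ⟨c, hc, rfl⟩ ⟨d, hd, hdc⟩
    have hcd : c + d ∈ M := by
      rw [← QuotientAddGroup.eq_zero_iff, QuotientAddGroup.mk_add, hdc, add_neg_cancel]
    exact (QuotientAddGroup.eq_zero_iff c).2
      (hM.mem_of_nonneg_of_le hcd hc (le_add_of_nonneg_right hd))

lemma mk_mem_quotientNonnegCone_iff {x : Γ} :
    (x : Γ ⧸ M) ∈ hM.quotientNonnegCone ↔ x⁻ ∈ M := by
  constructor
  · rintro ⟨c, hc, hcx⟩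
    refine hM (QuotientAddGroup.eq_iff_sub_mem.1 hcx) ?_
    rw [abs_of_nonneg (negPart_nonneg x)]
    refine sup_le ((?_ : -x ≤ c - x).trans (le_abs_self _)) (abs_nonneg _)
    rw [sub_eq_add_neg]
    exact le_add_of_nonneg_left hc
  · intro hx
    refine ⟨x⁺, posPart_nonneg x, QuotientAddGroup.eq_iff_sub_mem.2 ?_⟩
    have hx' : x⁺ - x = x⁻ := sub_eq_iff_eq_add'.2 (sub_eq_iff_eq_add.1 (posPart_sub_negPart x))
    rwa [hx']

variable (hprime : ∀ z : Γ, z⁺ ∈ M ∨ z⁻ ∈ M)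

noncomputable abbrev quotientLinearOrder : LinearOrder (Γ ⧸ M) :=
  have : HasMemOrNegMem hM.quotientNonnegCone := ⟨fun q => by
    induction q using QuotientAddGroup.induction_on with | H z =>
    rw [← QuotientAddGroup.mk_neg, mk_mem_quotientNonnegCone_iff, mk_mem_quotientNonnegCone_iff,
      negPart_neg]
    exact (hprime z).symm⟩
  open Classical in LinearOrder.mkOfAddGroupCone hM.quotientNonnegCone

lemma isOrderedAddMonoid_quotient :
    letI := hM.quotientLinearOrder hprime
    IsOrderedAddMonoid (Γ ⧸ M) :=
  IsOrderedAddMonoid.mkOfCone hM.quotientNonnegCone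

lemma quotient_mk_le_mk_iff {x y : Γ} :
    letI := hM.quotientLinearOrder hprime
    (x : Γ ⧸ M) ≤ y ↔ (x - y)⁺ ∈ M := by
  show ((y - x : Γ) : Γ ⧸ M) ∈ hM.quotientNonnegCone ↔ _
  rw [mk_mem_quotientNonnegCone_iff, ← neg_sub, negPart_neg]

lemma quotient_mk_nonneg_iff {x : Γ} :
    letI := hM.quotientLinearOrder hprime
    0 ≤ (x : Γ ⧸ M) ↔ x⁻ ∈ M := by
  rw [← QuotientAddGroup.mk_zero, quotient_mk_le_mk_iff, zero_sub, posPart_neg]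

lemma quotient_mk_sup (x y : Γ) :
    letI := hM.quotientLinearOrder hprime
    ((x ⊔ y : Γ) : Γ ⧸ M) = (x : Γ ⧸ M) ⊔ (y : Γ ⧸ M) := by
  let := hM.quotientLinearOrder hprime
  have key {x y : Γ} (h : (x : Γ ⧸ M) ≤ y) : ((x ⊔ y : Γ) : Γ ⧸ M) = y := by
    rw [sup_eq_add_posPart_sub, QuotientAddGroup.mk_add,
      (QuotientAddGroup.eq_zero_iff _).2 ((hM.quotient_mk_le_mk_iff hprime).1 h), add_zero]
  rcases le_total (x : Γ ⧸ M) y with h | h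
  · rw [key h, sup_eq_right.2 h]
  · rw [sup_comm, key h, sup_eq_left.2 h]

end LatticeOrderedAddCommGroup.IsSolid

end

lemma Finset.exists_mem_le_of_inf'_le {α ι : Type*} [Lattice α] [Std.Total (α := α) (· ≤ ·)]
    {s : Finset ι} (hs : s.Nonempty) {f : ι → α} {a : α} (h : s.inf' hs f ≤ a) :
    ∃ i ∈ s, f i ≤ a := by
  classical
  let := Lattice.toLinearOrder α
  exact (Finset.inf'_le_iff hs).1 h

section

variable {Γ G : Type*} [Lattice Γ] [AddCommGroup Γ] [Lattice G] [AddCommGroup G]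
  (φ : Γ →+ G) (hφ : ∀ x y : Γ, φ (x ⊔ y) = φ x ⊔ φ y)
include hφ

lemma AddMonoidHom.monotone_of_map_sup : Monotone φ := fun x y h => by
  rw [← sup_eq_right.2 h, hφ]
  exact le_sup_left

lemma AddMonoidHom.map_inf_of_map_sup [AddLeftMono Γ] [AddLeftMono G] (x y : Γ) :
    φ (x ⊓ y) = φ x ⊓ φ y := by
  rw [← neg_neg (x ⊓ y), neg_inf, map_neg, hφ, map_neg, map_neg, neg_sup, neg_neg, neg_neg]

lemma AddMonoidHom.map_negPart_of_map_sup (x : Γ) : φ x⁻ = (φ x)⁻ := by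
  rw [negPart_def, negPart_def, hφ, map_neg, map_zero]

theorem AddMonoidHom.exists_map_nonneg_of_inf'_le_nsmul_sup' [AddLeftMono Γ] [AddLeftMono G]
    [Std.Total (α := G) (· ≤ ·)]
    {ι κ : Type*} {s : Finset ι} {t : Finset κ} (hs : s.Nonempty) (ht : t.Nonempty)
    {a : ι → Γ} {b : κ → Γ} {k : ℕ}
    (hk : t.inf' ht (fun j => (b j)⁻) ≤ k • s.sup' hs (fun i => (a i)⁻))
    (ha : ∀ i ∈ s, 0 ≤ φ (a i)) : ∃ j ∈ t, 0 ≤ φ (b j) := by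
  have hA : φ (s.sup' hs fun i => (a i)⁻) ≤ 0 := by
    rw [Finset.apply_sup'_eq_sup'_comp hs φ hφ]
    refine Finset.sup'_le hs _ fun i hi => ?_
    rw [Function.comp_apply, φ.map_negPart_of_map_sup hφ, negPart_nonpos]
    exact ha i hi
  have hB : t.inf' ht (fun j => (φ (b j))⁻) ≤ 0 :=
    calc t.inf' ht (fun j => (φ (b j))⁻) = φ (t.inf' ht fun j => (b j)⁻) := by
          rw [Finset.apply_inf'_eq_inf'_comp ht φ (φ.map_inf_of_map_sup hφ)]
          exact Finset.inf'_congr ht rfl fun j _ => (φ.map_negPart_of_map_sup hφ (b j)).symm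
      _ ≤ k • φ (s.sup' hs fun i => (a i)⁻) := map_nsmul φ k _ ▸ φ.monotone_of_map_sup hφ hk
      _ ≤ 0 := nsmul_nonpos hA k
  obtain ⟨j, hj, hbj⟩ := Finset.exists_mem_le_of_inf'_le ht hB
  exact ⟨j, hj, negPart_nonpos.1 hbj⟩

end

/-- Formal Nullstellensatz for the linear lattice of an abelian ℓ-group:
the entailment `a₁, …, aₙ ⊢ b₁, …, bₘ` (validity in every linearly ordered
quotient, here expressed via lattice-group morphisms to linearly ordered
abelian groups) holds iff `b₁⁻ ∧ ⋯ ∧ bₘ⁻ ≤ k·(a₁⁻ ∨ ⋯ ∨ aₙ⁻)` for some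
`k > 0`. -/
theorem liog_formal_nullstellensatz {Γ : Type u} [Lattice Γ] [AddCommGroup Γ]
    [CovariantClass Γ Γ (· + ·) (· ≤ ·)] {n m : ℕ}
    (a : Fin (n + 1) → Γ) (b : Fin (m + 1) → Γ) :
    (∀ (G : Type u) (_ : Lattice G) (_ : AddCommGroup G)
        (_ : CovariantClass G G (· + ·) (· ≤ ·)) (_ : IsTotal G (· ≤ ·))
        (φ : Γ →+ G), (∀ x y : Γ, φ (x ⊔ y) = φ x ⊔ φ y) →
        (∀ i, 0 ≤ φ (a i)) → ∃ j, 0 ≤ φ (b j)) ↔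
      ∃ k : ℕ, 0 < k ∧
        Finset.univ.inf' Finset.univ_nonempty (fun j => (-(b j)) ⊔ 0) ≤
          k • Finset.univ.sup' Finset.univ_nonempty (fun i => (-(a i)) ⊔ 0) := by
  set A := Finset.univ.sup' Finset.univ_nonempty fun i => (a i)⁻
  set B := Finset.univ.inf' Finset.univ_nonempty fun j => (b j)⁻
  have le_A (i) : (a i)⁻ ≤ A := Finset.le_sup' (fun i => (a i)⁻) (Finset.mem_univ i)
  have B_le (j) : B ≤ (b j)⁻ := Finset.inf'_le (fun j => (b j)⁻) (Finset.mem_univ j)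
  have hA : 0 ≤ A := (negPart_nonneg (a 0)).trans (le_A 0)
  have hB : 0 ≤ B := Finset.le_inf' _ _ fun j _ => negPart_nonneg (b j)
  change _ ↔ ∃ k : ℕ, 0 < k ∧ B ≤ k • A
  refine ⟨fun hvalid => ?_, fun ⟨k, _, hk⟩ G _ _ _ _ φ hφ ha => ?_⟩
  · by_contra! hAB
    obtain ⟨M, hM, hprime, hAM, hBM⟩ :=
      AddSubgroup.exists_isSolid_prime_of_forall_not_abs_le_nsmul (A := A) (B := B) fun k hk => by
        rw [abs_of_nonneg hA, abs_of_nonneg hB] at hk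
        exact hAB (k + 1) k.succ_pos (hk.trans (nsmul_le_nsmul_left hA k.le_succ))
    let := hM.quotientLinearOrder hprime
    have := hM.isOrderedAddMonoid_quotient hprime
    obtain ⟨j, hj⟩ := hvalid (Γ ⧸ M) inferInstance inferInstance inferInstance inferInstance
      (QuotientAddGroup.mk' M) (hM.quotient_mk_sup hprime) fun i =>
        (hM.quotient_mk_nonneg_iff hprime).2
          (hM.mem_of_nonneg_of_le hAM (negPart_nonneg _) (le_A i))
    exact hBM (hM.mem_of_nonneg_of_le ((hM.quotient_mk_nonneg_iff hprime).1 hj) hB (B_le j))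
  · obtain ⟨j, -, hj⟩ := φ.exists_map_nonneg_of_inf'_le_nsmul_sup' hφ Finset.univ_nonempty
      Finset.univ_nonempty hk fun i _ => ha i
    exact ⟨j, hj⟩
end

section
/- Let f : T → T' be a morphism of distributive lattices and suppose there is a map f̃ : T' → T such that for all a, c ∈ T and b ∈ T' one has f(a) ∧ b ≤ f(c) ↔ a ∧ f̃(b) ≤ c. Then: (a) b ≤ f(f̃(b)) for all b; (b) f̃(b₁ ∨ b₂) = f̃(b₁) ∨ f̃(b₂); (c) f̃(f(a) ∧ b) = a ∧ f̃(b); (d) f̃(f(a)) = f̃(1) ∧ a. -/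
/-!
Taking `a = ⊤` in the hypothesis shows that `f̃` is left adjoint to `f`; (a) and (b) are then
the unit of the adjunction and the fact that left adjoints preserve joins. The hypothesis for
general `a` is Frobenius reciprocity, which gives (c), and (d) is (c) at `b = ⊤`.
-/

def IsFrobeniusLeftAdjoint {α β : Type*} [Min α] [LE α] [Min β] [LE β]
    (f : α → β) (g : β → α) : Prop :=
  ∀ (a c : α) (b : β), f a ⊓ b ≤ f c ↔ a ⊓ g b ≤ c

namespace IsFrobeniusLeftAdjoint

variable {α β F : Type*} [SemilatticeInf α] [OrderTop α] [SemilatticeInf β] [OrderTop β]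
  [FunLike F α β] {f : F} {g : β → α}

theorem galoisConnection [TopHomClass F α β] (h : IsFrobeniusLeftAdjoint f g) :
    GaloisConnection g f := fun b c => by
  simpa only [map_top, top_inf_eq] using (h ⊤ c b).symm

theorem apply_inf_left [InfTopHomClass F α β] (h : IsFrobeniusLeftAdjoint f g) (a : α) (b : β) :
    g (f a ⊓ b) = a ⊓ g b := by
  have gc := h.galoisConnection
  apply le_antisymm
  · refine gc.l_le ?_
    rw [map_inf]
    exact inf_le_inf_left _ (gc.le_u_l b)
  · exact (h a _ b).mp (gc.le_u_l _)

theorem apply_apply [InfTopHomClass F α β] (h : IsFrobeniusLeftAdjoint f g) (a : α) :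
    g (f a) = g ⊤ ⊓ a := by
  rw [inf_comm]
  simpa only [inf_top_eq] using h.apply_inf_left a ⊤

end IsFrobeniusLeftAdjoint

/-- Theorem 8 / 3.5, implication 3 ⇒ 2: if `f̃` satisfies the adjoint-like
condition (2b), then it satisfies (2a), (2c) and (2d). -/
theorem open_map_adjoint_properties {T T' : Type*}
    [DistribLattice T] [BoundedOrder T] [DistribLattice T'] [BoundedOrder T']
    (f : BoundedLatticeHom T T') (ft : T' → T)
    (h2b : ∀ (a c : T) (b : T'), f a ⊓ b ≤ f c ↔ a ⊓ ft b ≤ c) :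
    (∀ b : T', b ≤ f (ft b)) ∧
    (∀ b₁ b₂ : T', ft (b₁ ⊔ b₂) = ft b₁ ⊔ ft b₂) ∧
    (∀ (a : T) (b : T'), ft (f a ⊓ b) = a ⊓ ft b) ∧
    (∀ a : T, ft (f a) = ft ⊤ ⊓ a) := by
  have h : IsFrobeniusLeftAdjoint f ft := h2b
  have gc := h.galoisConnection
  exact ⟨gc.le_u_l, fun _ _ => gc.l_sup, h.apply_inf_left, h.apply_apply⟩
end

section
/- In a distributive lattice T, if x ∨ y = 1 and there exist a, b with a ∨ x = 1, b ∨ y = 1, and a ∧ b = 0, then setting a₁ = a ∨ (x ∧ y) and b₁ = b ∨ (x ∧ y) one has a₁ ∨ x = 1, b₁ ∨ y = 1, and a₁ ∧ b₁ = x ∧ y. -/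
theorem normality_strengthening_general {T : Type*} [DistribLattice T] [BoundedOrder T]
    (x y a b : T) (hax : a ⊔ x = ⊤) (hby : b ⊔ y = ⊤)
    (hab : a ⊓ b = ⊥) :
    (a ⊔ (x ⊓ y)) ⊔ x = ⊤ ∧ (b ⊔ (x ⊓ y)) ⊔ y = ⊤ ∧
      (a ⊔ (x ⊓ y)) ⊓ (b ⊔ (x ⊓ y)) = x ⊓ y :=
  ⟨eq_top_mono (sup_le_sup_right le_sup_left x) hax,
    eq_top_mono (sup_le_sup_right le_sup_left y) hby,
    by rw [← sup_inf_right, hab, bot_sup_eq]⟩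

/-- Strengthening of the normality condition in a distributive lattice. -/
theorem normality_strengthening {T : Type*} [DistribLattice T] [BoundedOrder T]
    (x y a b : T) (hxy : x ⊔ y = ⊤) (hax : a ⊔ x = ⊤) (hby : b ⊔ y = ⊤)
    (hab : a ⊓ b = ⊥) :
    (a ⊔ (x ⊓ y)) ⊔ x = ⊤ ∧ (b ⊔ (x ⊓ y)) ⊔ y = ⊤ ∧
      (a ⊔ (x ⊓ y)) ⊓ (b ⊔ (x ⊓ y)) = x ⊓ y :=
  normality_strengthening_general x y a b hax hby hab
end

section
/- (Kronecker-Heitmann, dimension 1 case.) Let A be a commutative ring of Krull dimension ≤ 0 (for every a ∈ A there exist k ∈ ℕ and x ∈ A with a^k(1 − xa) = 0), and let b ∈ A. Then there exists x ∈ A such that for every a ∈ A, √⟨a, b⟩ = √⟨b + ax⟩. -/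
/-!
From `b ^ k * (1 - y * b) = 0` one extracts an idempotent `e = (y * b) ^ (k + 1)` that is a
multiple of `b` and such that `b * (1 - e)` is nilpotent. Taking `x = 1 - e`, the element
`c = b + a * (1 - e)` satisfies `c * e = b * e`, so up to radicals `c` recovers `b`
(on the `e`-part exactly, on the `(1 - e)`-part because `b` is nilpotent there), and then
`a = (c - b) + a * e` with `a * e` a multiple of `b`.
-/

namespace Ideal

variable {A : Type*} [CommRing A]

theorem radical_span_pair_eq_radical_span_add_mul_one_sub {b e : A} (he : IsIdempotentElem e)
    (hbe : b ∣ e) (hnil : IsNilpotent (b * (1 - e))) (a : A) :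
    (span {a, b}).radical = (span {b + a * (1 - e)}).radical := by
  set c := b + a * (1 - e)
  have hc : c ∈ (span {c}).radical := le_radical (mem_span_singleton_self c)
  have hb : b ∈ (span {c}).radical := by
    have hce : c * e = b * e := by
      simp only [c, add_mul, mul_assoc, sub_mul, one_mul, he.eq, sub_self, mul_zero, add_zero]
    obtain ⟨n, hn⟩ := hnil
    have hbe' : b * e ∈ (span {c}).radical := hce ▸ mul_mem_right e _ hc
    have hb1e : b * (1 - e) ∈ (span {c}).radical := ⟨n, hn ▸ zero_mem _⟩
    simpa [mul_sub] using add_mem hbe' hb1e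
  have ha : a ∈ (span {c}).radical := by
    obtain ⟨z, rfl⟩ := hbe
    have hae : a * (b * z) ∈ (span {c}).radical := mul_mem_left _ a (mul_mem_right z _ hb)
    convert add_mem (sub_mem hc hb) hae using 1
    ring
  apply le_antisymm
  · rw [radical_le_radical_iff, span_le, Set.insert_subset_iff, Set.singleton_subset_iff]
    exact ⟨ha, hb⟩
  · refine radical_mono (span_le.mpr (Set.singleton_subset_iff.mpr ?_))
    exact add_mem (subset_span (by simp)) (mul_mem_right _ _ (subset_span (by simp)))

end Ideal

section

variable {A : Type*} [CommRing A]

theorem pow_mul_mul_pow_eq_pow {b y : A} {k : ℕ} (h : b ^ k * (1 - y * b) = 0) (m : ℕ) :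
    b ^ k * (y * b) ^ m = b ^ k := by
  induction m with
  | zero => simp
  | succ m ih => linear_combination (y * b) * ih - h

theorem exists_isIdempotentElem_dvd_isNilpotent_mul_one_sub {b y : A} {k : ℕ}
    (h : b ^ k * (1 - y * b) = 0) :
    ∃ e : A, IsIdempotentElem e ∧ b ∣ e ∧ IsNilpotent (b * (1 - e)) := by
  have hpow := pow_mul_mul_pow_eq_pow h (k + 1)
  have he : IsIdempotentElem ((y * b) ^ (k + 1)) := by
    unfold IsIdempotentElem
    linear_combination (y ^ (k + 1) * b) * hpow
  refine ⟨(y * b) ^ (k + 1), he, ⟨y ^ (k + 1) * b ^ k, by ring⟩, k + 1, ?_⟩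
  rw [mul_pow, he.one_sub.pow_succ_eq, pow_succ', mul_assoc, mul_sub, mul_one, hpow, sub_self,
    mul_zero]

end

/-- Kronecker–Heitmann theorem, dimension-one case. -/
theorem kronecker_heitmann_dim_one {A : Type*} [CommRing A]
    (hdim : ∀ a : A, ∃ (k : ℕ) (x : A), a ^ k * (1 - x * a) = 0) (b : A) :
    ∃ x : A, ∀ a : A,
      (Ideal.span ({a, b} : Set A)).radical = (Ideal.span ({b + a * x} : Set A)).radical := by
  obtain ⟨k, y, h⟩ := hdim b
  obtain ⟨e, he, hbe, hnil⟩ := exists_isIdempotentElem_dvd_isNilpotent_mul_one_sub h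
  exact ⟨1 - e, Ideal.radical_span_pair_eq_radical_span_add_mul_one_sub he hbe hnil⟩
end

section
/- (Stable range from dimension 0.) Let A be a commutative ring of Krull dimension ≤ 0, i.e. for every a ∈ A there exist k ∈ ℕ and x ∈ A with a^k = x·a^{k+1}. If 1 ∈ ⟨a, a₁⟩ then there exists x₁ ∈ A with 1 ∈ ⟨a₁ + x₁·a⟩, i.e. a₁ + x₁·a is invertible. -/
/-!
If `a ^ k = x * a ^ (k + 1)`, then `e = (x * a) ^ (k + 1)` is an idempotent splitting `A` as
`e A × (1 - e) A`. Since `e` is a multiple of `a`, the element `a` is a unit in `e A`; since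
`e * a ^ k = a ^ k`, the element `a` is nilpotent in `(1 - e) A`, so there `a₁` is a unit.
Hence `a₁ + x₁ * a = a₁ * (1 - e) + e` is a unit for `x₁ = (1 - a₁) * x ^ (k + 1) * a ^ k`.
-/

section

variable {R : Type*} [CommRing R] {a x : R} {k : ℕ}

theorem mul_pow_mul_pow_of_pow_eq_mul_pow_succ (h : a ^ k = x * a ^ (k + 1)) (m : ℕ) :
    (x * a) ^ m * a ^ k = a ^ k := by
  induction m with
  | zero => simp
  | succ m ih =>
    calc (x * a) ^ (m + 1) * a ^ k = (x * a) ^ m * (x * a ^ (k + 1)) := by ring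
    _ = a ^ k := by rw [← h, ih]

theorem isIdempotentElem_mul_pow_succ_of_pow_eq_mul_pow_succ (h : a ^ k = x * a ^ (k + 1)) :
    IsIdempotentElem ((x * a) ^ (k + 1)) :=
  calc (x * a) ^ (k + 1) * (x * a) ^ (k + 1)
      = x ^ (k + 1) * ((x * a) ^ (k + 1) * a ^ k) * a := by ring
  _ = (x * a) ^ (k + 1) := by
    rw [mul_pow_mul_pow_of_pow_eq_mul_pow_succ h]; ring

end

theorem IsIdempotentElem.isUnit_mul_one_sub_add {R : Type*} [CommRing R] {e b v : R}
    (he : IsIdempotentElem e) (hv : v * b * (1 - e) = 1 - e) : IsUnit (b * (1 - e) + e) :=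
  IsUnit.of_mul_eq_one (v * (1 - e) + e) <| by
    linear_combination hv + (1 - v + b * v - b) * he.eq

/-- Bass stable range theorem, n = 1 case, for zero-dimensional rings. -/
theorem stable_range_of_dim_zero {A : Type*} [CommRing A]
    (hdim : ∀ a : A, ∃ (k : ℕ) (x : A), a ^ k = x * a ^ (k + 1))
    (a a₁ : A) (h : (1 : A) ∈ Ideal.span ({a, a₁} : Set A)) :
    ∃ x₁ : A, IsUnit (a₁ + x₁ * a) := by
  obtain ⟨k, x, hk⟩ := hdim a
  set e := (x * a) ^ (k + 1) with he_def
  have hea : e * a ^ k = a ^ k := mul_pow_mul_pow_of_pow_eq_mul_pow_succ hk (k + 1)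
  have hcop : IsCoprime a a₁ := Ideal.mem_span_pair.mp h
  obtain ⟨u, v, huv⟩ := hcop.pow_left (m := k)
  refine ⟨(1 - a₁) * (x ^ (k + 1) * a ^ k), ?_⟩
  have hsplit : a₁ + (1 - a₁) * (x ^ (k + 1) * a ^ k) * a = a₁ * (1 - e) + e := by
    rw [he_def]; ring
  rw [hsplit]
  exact (isIdempotentElem_mul_pow_succ_of_pow_eq_mul_pow_succ hk).isUnit_mul_one_sub_add
    (v := v) (by linear_combination (1 - e) * huv + u * hea)
end
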